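/- Let S = Σ_{n=0}^∞ (−1)ⁿ e^{−(n+1/2)π} / ((2n+1)(1 + e^{−(2n+1)π})) and fix μ > 0 and P ∈ ℝ. Then for all sufficiently large λ the propagator G(P; λ, μ) is defined, and lim_{λ→∞} √λ · μ² · G(P; λ, μ) = −4√2 S; i.e. in the strong-coupling (equivalently low-momentum) limit the propagator reduces at leading order to a momentum-independent Nambu–Jona-Lasinio contact term of order λ^{−1/2}. -/

import Mathlib

open Real

/-- The complete elliptic integral `K(i) = ∫₀^{π/2} dθ/√(1 + sin²θ)`. -/
noncomputable def Kell : ℝ := ∫ θ in (0:ℝ)..(π / 2), 1 / Real.sqrt (1 + Real.sin θ ^ 2)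

/-- The residues `Bₙ = (2n+1)(π²/K²)(-1)ⁿ e^{-(n+1/2)π}/(1 + e^{-(2n+1)π})` of the
exact infrared propagator. -/
noncomputable def B (n : ℕ) : ℝ :=
  (2 * (n : ℝ) + 1) * (π ^ 2 / Kell ^ 2) *
    ((-1 : ℝ) ^ n * Real.exp (-((n : ℝ) + 1 / 2) * π) /
      (1 + Real.exp (-(2 * (n : ℝ) + 1) * π)))

/-- The mass spectrum `mₙ = (n + 1/2)(π/K)(λ/2)^{1/4} μ`. -/
noncomputable def msp (lam μ : ℝ) (n : ℕ) : ℝ :=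
  ((n : ℝ) + 1 / 2) * (π / Kell) * (lam / 2) ^ ((1 : ℝ) / 4) * μ

/-- The exact infrared propagator `G(P; λ, μ) = Σₙ Bₙ/(P - mₙ²)`. -/
noncomputable def Gprop (P lam μ : ℝ) : ℝ := ∑' n : ℕ, B n / (P - msp lam μ n ^ 2)

/-- The constant `S = Σₙ (-1)ⁿ e^{-(n+1/2)π} / ((2n+1)(1 + e^{-(2n+1)π}))`. -/
noncomputable def Sconst : ℝ :=
  ∑' n : ℕ, (-1 : ℝ) ^ n * Real.exp (-((n : ℝ) + 1 / 2) * π) /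
    ((2 * (n : ℝ) + 1) * (1 + Real.exp (-(2 * (n : ℝ) + 1) * π)))

/-!
With `t = √(λ/2) μ²` and `aₙ = (n + 1/2)² (π/K)²` one has `mₙ² = aₙ t` and `√λ μ² = √2 t`, so
`√λ μ² G = √2 · t Σ Bₙ/(P - aₙ t)`. Since `aₙ ≥ (π/K)²/4 > 0`, no `mₙ²` equals `P` once `t` is
large, each term `t Bₙ/(P - aₙ t)` tends to `-Bₙ/aₙ = -4 sₙ`, and eventually
`|t Bₙ/(P - aₙ t)| ≤ 2 |Bₙ/aₙ|`, which is summable because `|sₙ| ≤ e^{-(n+1/2)π}`.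
Tannery's theorem (dominated convergence for series) then gives the limit `-4√2 S`.
-/

open Filter Topology

theorem Kell_pos : 0 < Kell := by
  have hcont : Continuous fun θ : ℝ => 1 / √(1 + sin θ ^ 2) :=
    continuous_const.div (by fun_prop) fun θ => by positivity
  exact intervalIntegral.intervalIntegral_pos_of_pos_on (hcont.intervalIntegrable _ _)
    (fun θ _ => by positivity) (by positivity)

theorem msp_sq {lam : ℝ} (hlam : 0 ≤ lam) (μ : ℝ) (n : ℕ) :
    msp lam μ n ^ 2 = ((n + 1 / 2) ^ 2 * (π / Kell) ^ 2) * (√(lam / 2) * μ ^ 2) := by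
  have hroot : ((lam / 2) ^ ((1 : ℝ) / 4)) ^ 2 = √(lam / 2) := by
    rw [← rpow_natCast, ← rpow_mul (by positivity), sqrt_eq_rpow]
    norm_num
  rw [msp, mul_pow, mul_pow, mul_pow, hroot]
  ring

theorem abs_mul_div_sub_mul_le {P a t : ℝ} (b : ℝ) (ha : 0 < a) (ht : 0 < t)
    (hP : 2 * |P| ≤ a * t) : |t * (b / (P - a * t))| ≤ 2 * |b / a| := by
  have hden : a * t / 2 ≤ |P - a * t| := by
    rw [abs_sub_comm]
    linarith [abs_sub_abs_le_abs_sub (a * t) P, abs_of_pos (mul_pos ha ht)]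
  rw [abs_mul, abs_div, abs_div, abs_of_pos ht, abs_of_pos ha, mul_div_assoc']
  calc t * |b| / |P - a * t| ≤ t * |b| / (a * t / 2) := by
        gcongr
    _ = 2 * (|b| / a) := by field_simp

section SpectralSum

variable {a : ℕ → ℝ} {a₀ : ℝ}

theorem eventually_forall_ne_mul (ha₀ : 0 < a₀) (ha : ∀ n, a₀ ≤ a n) (P : ℝ) :
    ∀ᶠ t in atTop, ∀ n, P ≠ a n * t := by
  filter_upwards [eventually_gt_atTop (|P| / a₀)] with t ht n hPt
  have hP : |P| < a₀ * t := by rwa [div_lt_iff₀' ha₀] at ht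
  have ht0 : 0 < t := lt_of_le_of_lt (by positivity) ht
  nlinarith [le_abs_self P, ha n]

theorem tendsto_mul_tsum_div_sub_mul (ha₀ : 0 < a₀) (ha : ∀ n, a₀ ≤ a n) {b : ℕ → ℝ}
    (hb : Summable fun n => b n / a n) (P : ℝ) :
    Tendsto (fun t => t * ∑' n, b n / (P - a n * t)) atTop (𝓝 (-∑' n, b n / a n)) := by
  have hterm : ∀ n, Tendsto (fun t => t * (b n / (P - a n * t))) atTop
      (𝓝 (-(b n / a n))) := by
    intro n
    have han : a n ≠ 0 := (ha₀.trans_le (ha n)).ne'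
    have hlim : Tendsto (fun t => b n / (P / t - a n)) atTop (𝓝 (b n / (0 - a n))) :=
      tendsto_const_nhds.div ((tendsto_const_nhds.div_atTop tendsto_id).sub_const _)
        (by simpa using han)
    rw [zero_sub, div_neg] at hlim
    refine hlim.congr' ?_
    filter_upwards [eventually_gt_atTop 0] with t ht
    rw [show P / t - a n = (P - a n * t) / t by field_simp, div_div_eq_mul_div]
    ring
  have hbound : ∀ᶠ t in atTop, ∀ n, ‖t * (b n / (P - a n * t))‖ ≤ 2 * |b n / a n| := by
    filter_upwards [eventually_gt_atTop 0, eventually_ge_atTop (2 * |P| / a₀)] with t ht hP n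
    rw [div_le_iff₀ ha₀] at hP
    exact abs_mul_div_sub_mul_le _ (ha₀.trans_le (ha n)) ht
      (hP.trans (by rw [mul_comm]; gcongr; exact ha n))
  simpa only [tsum_mul_left, tsum_neg] using
    tendsto_tsum_of_dominated_convergence (hb.abs.mul_left 2) hterm hbound

end SpectralSum

noncomputable def sconstTerm (n : ℕ) : ℝ :=
  (-1 : ℝ) ^ n * exp (-((n : ℝ) + 1 / 2) * π) /
    ((2 * (n : ℝ) + 1) * (1 + exp (-(2 * (n : ℝ) + 1) * π)))

theorem B_div_eq (n : ℕ) :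
    B n / ((n + 1 / 2) ^ 2 * (π / Kell) ^ 2) = 4 * sconstTerm n := by
  have : (2 * (n : ℝ) + 1) ≠ 0 := by positivity
  have : 0 < 1 + exp (-(2 * (n : ℝ) + 1) * π) := by positivity
  have := Kell_pos.ne'
  have := pi_pos.ne'
  rw [B, sconstTerm]
  field_simp
  ring

theorem summable_sconstTerm : Summable sconstTerm := by
  refine Summable.of_norm_bounded ((summable_geometric_of_lt_one (exp_nonneg _)
    (exp_lt_one_iff.mpr (neg_neg_of_pos pi_pos))).mul_left (exp (-(π / 2)))) fun n => ?_
  have hexp : exp (-((n : ℝ) + 1 / 2) * π) = exp (-(π / 2)) * exp (-π) ^ n := by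
    rw [← exp_nat_mul, ← exp_add]
    ring_nf
  rw [sconstTerm, norm_div, norm_mul, norm_pow, norm_neg, norm_one, one_pow, one_mul,
    Real.norm_of_nonneg (exp_nonneg _), ← hexp]
  refine div_le_self (exp_nonneg _) ?_
  rw [norm_mul, Real.norm_of_nonneg (by positivity), Real.norm_of_nonneg (by positivity)]
  nlinarith [exp_pos (-(2 * (n : ℝ) + 1) * π), (Nat.cast_nonneg n : (0 : ℝ) ≤ n)]

/-- Nambu–Jona-Lasinio limit: for fixed `μ > 0` and `P`, the propagator is defined
for all sufficiently large `λ` and `√λ μ² G(P; λ, μ) → -4√2 S` as `λ → ∞`; i.e. in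
the strong-coupling (equivalently low-momentum) limit the propagator reduces at
leading order to a momentum-independent contact term of order `λ^{-1/2}`. -/
theorem strong_coupling_NJL_limit (μ : ℝ) (hμ : 0 < μ) (P : ℝ) :
    (∀ᶠ lam in Filter.atTop, ∀ n : ℕ, P ≠ msp lam μ n ^ 2) ∧
    Filter.Tendsto (fun lam : ℝ => Real.sqrt lam * μ ^ 2 * Gprop P lam μ)
      Filter.atTop (nhds (-(4 * Real.sqrt 2 * Sconst))) := by
  set a : ℕ → ℝ := fun n => (n + 1 / 2) ^ 2 * (π / Kell) ^ 2
  have ha₀ : 0 < (π / Kell) ^ 2 / 4 := by have := Kell_pos; positivity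
  have ha : ∀ n, (π / Kell) ^ 2 / 4 ≤ a n := fun n => by
    show _ ≤ (n + 1 / 2) ^ 2 * (π / Kell) ^ 2
    have : (1 : ℝ) / 4 ≤ (n + 1 / 2) ^ 2 := by nlinarith [(Nat.cast_nonneg n : (0 : ℝ) ≤ n)]
    nlinarith [sq_nonneg (π / Kell)]
  have hsum : Summable fun n => B n / a n := by
    simpa only [a, B_div_eq] using summable_sconstTerm.mul_left 4
  have hcoupling : Tendsto (fun lam : ℝ => √(lam / 2) * μ ^ 2) atTop atTop :=
    (tendsto_sqrt_atTop.comp (tendsto_id.atTop_div_const two_pos)).atTop_mul_const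
      (by positivity)
  constructor
  · filter_upwards [hcoupling.eventually (eventually_forall_ne_mul ha₀ ha P),
      eventually_ge_atTop 0] with lam hne hlam n
    rw [msp_sq hlam]
    exact hne n
  · have hlim := ((tendsto_mul_tsum_div_sub_mul ha₀ ha hsum P).comp hcoupling).const_mul √2
    rw [show √2 * -∑' n, B n / a n = -(4 * √2 * Sconst) by
      simp only [a, B_div_eq, tsum_mul_left, Sconst, sconstTerm]; ring] at hlim
    refine hlim.congr' ?_
    filter_upwards [eventually_ge_atTop 0] with lam hlam
    have hsplit : √lam = √2 * √(lam / 2) := by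
      rw [← sqrt_mul zero_le_two]; ring_nf
    simp only [Function.comp, Gprop, msp_sq hlam, hsplit, a]
    ring
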